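/- Every noncommutative Involutive Basis with respect to a strong involutive division is a Gröbner Basis: if G is an involutive basis for an ideal J in k⟨x_1,...,x_n⟩ with respect to a strong involutive division I and an admissible monomial ordering, then every S-polynomial formed from an overlap of leading monomials of elements of G reduces (conventionally) to zero modulo G. -/

import Mathlib

/-! Framework: noncommutative polynomials over the free associative algebra
`k⟨x_1, …, x_n⟩`, realised as the monoid algebra of the free monoid on
`Fin n`; admissible monomial orderings; noncommutative involutive divisions. -/

/-- Noncommutative monomials: words over the alphabet `x_1, …, x_n`. -/
abbrev NCWord (n : ℕ) : Type := FreeMonoid (Fin n)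

/-- Noncommutative polynomials: the free associative algebra `k⟨x_1, …, x_n⟩`. -/
abbrev NCPoly (k : Type) [Field k] (n : ℕ) : Type := MonoidAlgebra k (NCWord n)

/-- An admissible monomial ordering on noncommutative monomials: a total order
with `1` least and compatible with two-sided multiplication. -/
structure AdmOrder (n : ℕ) where
  le : NCWord n → NCWord n → Prop
  refl : ∀ a, le a a
  trans : ∀ {a b c}, le a b → le b c → le a c
  antisymm : ∀ {a b}, le a b → le b a → a = b
  total : ∀ a b, le a b ∨ le b a
  one_le : ∀ a, le 1 a
  mul_le_mul : ∀ {a b} (l r : NCWord n), le a b → le (l * a * r) (l * b * r)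

/-- A noncommutative involutive division: an assignment, to each monomial `u`
relative to a set `U` of monomials, of sets of left multiplicative and right
multiplicative variables. -/
structure InvDivision (n : ℕ) where
  Lmult : Set (NCWord n) → NCWord n → Set (Fin n)
  Rmult : Set (NCWord n) → NCWord n → Set (Fin n)

/-- The factorisation `w = l·u·r` witnesses involutive divisibility of `w` by
`u` (relative to `U`): the last letter of `l` (if any) is left multiplicative,
and the first letter of `r` (if any) is right multiplicative, for `u`. -/
def OkWitness {n : ℕ} (I : InvDivision n) (U : Set (NCWord n))
    (u l r : NCWord n) : Prop :=
  (∀ x : Fin n, (FreeMonoid.toList l).getLast? = some x → x ∈ I.Lmult U u) ∧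
  (∀ x : Fin n, (FreeMonoid.toList r).head? = some x → x ∈ I.Rmult U u)

/-- `u` involutively divides `w` relative to `U`. -/
def InvDiv {n : ℕ} (I : InvDivision n) (U : Set (NCWord n))
    (u w : NCWord n) : Prop :=
  ∃ l r : NCWord n, w = l * u * r ∧ OkWitness I U u l r

/-- The involutive cone of `u` relative to `U`. -/
def InvCone {n : ℕ} (I : InvDivision n) (U : Set (NCWord n))
    (u : NCWord n) : Set (NCWord n) :=
  {w : NCWord n | InvDiv I U u w}

/-- `I` is a strong involutive division. -/
def StrongDiv {n : ℕ} (I : InvDivision n) : Prop :=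
  (∀ U : Set (NCWord n), ∀ u₁ ∈ U, ∀ u₂ ∈ U,
    (InvCone I U u₁ ∩ InvCone I U u₂).Nonempty →
      InvCone I U u₁ ⊆ InvCone I U u₂ ∨ InvCone I U u₂ ⊆ InvCone I U u₁) ∧
  (∀ U : Set (NCWord n), ∀ u ∈ U, ∀ w l₁ r₁ l₂ r₂ : NCWord n,
    w = l₁ * u * r₁ → OkWitness I U u l₁ r₁ →
    w = l₂ * u * r₂ → OkWitness I U u l₂ r₂ → l₁ = l₂ ∧ r₁ = r₂) ∧
  (∀ U V : Set (NCWord n), V ⊆ U → ∀ v ∈ V,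
    I.Lmult U v ⊆ I.Lmult V v ∧ I.Rmult U v ⊆ I.Rmult V v)

variable {k : Type} [Field k] {n : ℕ}

/-- One step of involutive reduction of `f` by the set `P`. -/
def IStep {n : ℕ} (I : InvDivision n)
    (lm : NCPoly k n → NCWord n) (P : Finset (NCPoly k n))
    (f g : NCPoly k n) : Prop :=
  ∃ p ∈ P, ∃ w ∈ f.coeff.support, ∃ l r : NCWord n,
    w = l * lm p * r ∧ OkWitness I (lm '' (↑P : Set (NCPoly k n))) (lm p) l r ∧
    g = f - (f.coeff w / p.coeff (lm p)) •
      (MonoidAlgebra.single l (1 : k) * p * MonoidAlgebra.single r (1 : k))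

/-- One step of conventional reduction of `f` by the set `P`: as `IStep`, but
with no multiplicativity restriction on the factorisation. -/
def CStep {n : ℕ} (lm : NCPoly k n → NCWord n) (P : Finset (NCPoly k n))
    (f g : NCPoly k n) : Prop :=
  ∃ p ∈ P, ∃ w ∈ f.coeff.support, ∃ l r : NCWord n,
    w = l * lm p * r ∧
    g = f - (f.coeff w / p.coeff (lm p)) •
      (MonoidAlgebra.single l (1 : k) * p * MonoidAlgebra.single r (1 : k))

/-- `P` is autoreduced with respect to `I`. -/
def Autoreduced {n : ℕ} (I : InvDivision n)
    (lm : NCPoly k n → NCWord n) (P : Finset (NCPoly k n)) : Prop :=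
  ∀ p ∈ P, ∀ q ∈ P, q ≠ p → ∀ w ∈ p.coeff.support,
    ¬ InvDiv I (lm '' (↑P : Set (NCPoly k n))) (lm q) w

/-- `G` is an involutive basis with respect to `I`: `G` is autoreduced and
every two-sided multiple `u·g·v` of any `g ∈ G` by monomials `u, v`
involutively reduces to zero using `G`. -/
def InvolutiveBasis {n : ℕ} (I : InvDivision n)
    (lm : NCPoly k n → NCWord n) (G : Finset (NCPoly k n)) : Prop :=
  Autoreduced I lm G ∧
  ∀ g ∈ G, ∀ u v : NCWord n,
    Relation.ReflTransGen (IStep I lm G)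
      (MonoidAlgebra.single u (1 : k) * g * MonoidAlgebra.single v (1 : k)) 0

section AuxIBGB
variable {k : Type} [Field k] {n : ℕ}

private lemma sandwich (l r : NCWord n) (p : NCPoly k n) :
    (MonoidAlgebra.single l (1 : k) * p * MonoidAlgebra.single r 1).coeff =
      Finsupp.mapDomain (fun t => l * t * r) p.coeff := by
  induction p using MonoidAlgebra.induction_linear with
  | zero => simp
  | add f g hf hg =>
      rw [mul_add, add_mul, MonoidAlgebra.coeff_add, hf, hg, MonoidAlgebra.coeff_add,
        Finsupp.mapDomain_add]
  | single a b =>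
      rw [MonoidAlgebra.single_mul_single, MonoidAlgebra.single_mul_single,
        MonoidAlgebra.coeff_single, MonoidAlgebra.coeff_single, Finsupp.mapDomain_single]
      simp [mul_assoc]

private lemma sandwich_inj (l r : NCWord n) :
    Function.Injective (fun t : NCWord n => l * t * r) := by
  intro a b h
  simp only at h
  exact mul_left_cancel (mul_right_cancel h)

/-- The monomials involutively reducible by `G`. -/
private def Red (I : InvDivision n) (lm : NCPoly k n → NCWord n)
    (G : Finset (NCPoly k n)) (w : NCWord n) : Prop :=
  ∃ p, p ∈ G ∧ ∃ l r : NCWord n,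
    w = l * lm p * r ∧ OkWitness I (lm '' (↑G : Set (NCPoly k n))) (lm p) l r

open Classical in
/-- The canonical involutive reducer of a reducible monomial. -/
private noncomputable def bpoly (I : InvDivision n) (lm : NCPoly k n → NCWord n)
    (G : Finset (NCPoly k n)) (w : NCWord n) : NCPoly k n :=
  if h : Red I lm G w then
    MonoidAlgebra.single h.choose_spec.2.choose (1 : k) * h.choose *
      MonoidAlgebra.single h.choose_spec.2.choose_spec.choose 1
  else 0

variable {O : AdmOrder n} {I : InvDivision n} {lm : NCPoly k n → NCWord n}
  {G : Finset (NCPoly k n)}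

/-- Strongness + autoreducedness: the involutive reducer of a monomial is unique. -/
private lemma uniq (hI : StrongDiv I)
    (hlm : ∀ p : NCPoly k n, p ≠ 0 → lm p ∈ p.coeff.support ∧ ∀ a ∈ p.coeff.support, O.le a (lm p))
    (hG0 : (0 : NCPoly k n) ∉ G) (hA : Autoreduced I lm G)
    {p q : NCPoly k n} (hp : p ∈ G) (hq : q ∈ G) {w l r l' r' : NCWord n}
    (h1 : w = l * lm p * r)
    (o1 : OkWitness I (lm '' (↑G : Set (NCPoly k n))) (lm p) l r)
    (h2 : w = l' * lm q * r')
    (o2 : OkWitness I (lm '' (↑G : Set (NCPoly k n))) (lm q) l' r') :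
    p = q ∧ l = l' ∧ r = r' := by
  have hpU : lm p ∈ lm '' (↑G : Set (NCPoly k n)) := ⟨p, hp, rfl⟩
  have hqU : lm q ∈ lm '' (↑G : Set (NCPoly k n)) := ⟨q, hq, rfl⟩
  have hself : ∀ u : NCWord n, InvDiv I (lm '' (↑G : Set (NCPoly k n))) u u := by
    intro u
    refine ⟨1, 1, by simp, ⟨fun x hx => ?_, fun x hx => ?_⟩⟩ <;>
      simp [FreeMonoid.toList_one] at hx
  rcases eq_or_ne p q with rfl | hne
  · exact ⟨rfl, hI.2.1 _ (lm p) hpU w l r l' r' h1 o1 h2 o2⟩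
  · exfalso
    have hint : (InvCone I (lm '' (↑G : Set (NCPoly k n))) (lm p) ∩
        InvCone I (lm '' (↑G : Set (NCPoly k n))) (lm q)).Nonempty :=
      ⟨w, ⟨l, r, h1, o1⟩, ⟨l', r', h2, o2⟩⟩
    rcases hI.1 _ (lm p) hpU (lm q) hqU hint with hsub | hsub
    · exact hA p hp q hq hne.symm (lm p)
        (hlm p (by rintro rfl; exact hG0 hp)).1 (hsub (hself (lm p)))
    · exact hA q hq p hp hne (lm q)
        (hlm q (by rintro rfl; exact hG0 hq)).1 (hsub (hself (lm q)))

private lemma bpoly_spec (hI : StrongDiv I)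
    (hlm : ∀ p : NCPoly k n, p ≠ 0 → lm p ∈ p.coeff.support ∧ ∀ a ∈ p.coeff.support, O.le a (lm p))
    (hG0 : (0 : NCPoly k n) ∉ G) (hA : Autoreduced I lm G)
    {p : NCPoly k n} {l r w : NCWord n} (hp : p ∈ G)
    (h : w = l * lm p * r)
    (ok : OkWitness I (lm '' (↑G : Set (NCPoly k n))) (lm p) l r) :
    bpoly I lm G w = MonoidAlgebra.single l (1 : k) * p * MonoidAlgebra.single r 1 := by
  have hr : Red I lm G w := ⟨p, hp, l, r, h, ok⟩
  rw [bpoly, dif_pos hr]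
  have h1 := hr.choose_spec.1
  have h2 := hr.choose_spec.2.choose_spec.choose_spec
  obtain ⟨hpq, hl, hrr⟩ := uniq hI hlm hG0 hA h1 hp h2.1 h2.2 h ok
  rw [← hpq, ← hl, ← hrr]

private lemma bsupp (O : AdmOrder n)
    (hlm : ∀ p : NCPoly k n, p ≠ 0 → lm p ∈ p.coeff.support ∧ ∀ a ∈ p.coeff.support, O.le a (lm p))
    (hG0 : (0 : NCPoly k n) ∉ G) {p : NCPoly k n} (hp : p ∈ G) {l r v : NCWord n}
    (hv : v ∈ (MonoidAlgebra.single l (1 : k) * p * MonoidAlgebra.single r 1).coeff.support) :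
    O.le v (l * lm p * r) := by
  classical
  rw [sandwich] at hv
  obtain ⟨t, ht, htv⟩ := Finset.mem_image.mp (Finsupp.mapDomain_support hv)
  have hple : O.le t (lm p) := (hlm p (by rintro rfl; exact hG0 hp)).2 t ht
  have := O.mul_le_mul l r hple
  rwa [htv] at this

private lemma bapply (l r : NCWord n) (p : NCPoly k n) {lmp : NCWord n} :
    ((MonoidAlgebra.single l (1 : k) * p * MonoidAlgebra.single r 1 : NCPoly k n)).coeff
        (l * lmp * r) = p.coeff lmp := by
  rw [sandwich]
  exact Finsupp.mapDomain_apply (sandwich_inj l r) p.coeff lmp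

private lemma rep_of_isteps (hI : StrongDiv I)
    (hlm : ∀ p : NCPoly k n, p ≠ 0 → lm p ∈ p.coeff.support ∧ ∀ a ∈ p.coeff.support, O.le a (lm p))
    (hG0 : (0 : NCPoly k n) ∉ G) (hA : Autoreduced I lm G) {f : NCPoly k n}
    (h : Relation.ReflTransGen (IStep I lm G) f 0) :
    ∃ d : NCWord n →₀ k, (∀ w ∈ d.support, Red I lm G w) ∧
      f = d.sum fun w a => a • bpoly I lm G w := by
  induction h using Relation.ReflTransGen.head_induction_on with
  | refl => exact ⟨0, by simp, by simp⟩
  | @head fc gc hstep _ ih =>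
      obtain ⟨p, hp, w, hw, l, r, hwf, ok, hg⟩ := hstep
      obtain ⟨d, hd, hrep⟩ := ih
      classical
      refine ⟨d + Finsupp.single w (fc.coeff w / p.coeff (lm p)), fun v hv => ?_, ?_⟩
      · rcases Finset.mem_union.mp (Finsupp.support_add hv) with h1 | h1
        · exact hd v h1
        · have : v = w := Finset.mem_singleton.mp (Finsupp.support_single_subset h1)
          exact this ▸ ⟨p, hp, l, r, hwf, ok⟩
      · rw [Finsupp.sum_add_index' (fun a => by simp) (fun a b c => add_smul b c _),
          ← hrep, Finsupp.sum_single_index (by simp),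
          bpoly_spec hI hlm hG0 hA hp hwf ok, hg]
        abel

private lemma exists_max (O : AdmOrder n) (s : Finset (NCWord n)) (hs : s.Nonempty) :
    ∃ w ∈ s, ∀ v ∈ s, O.le v w := by
  classical
  induction s using Finset.induction_on with
  | empty => exact absurd hs (by simp)
  | @insert a s _ ih =>
      rcases s.eq_empty_or_nonempty with rfl | hs'
      · refine ⟨a, by simp, fun v hv => ?_⟩
        have : v = a := by simpa using hv
        exact this ▸ O.refl a
      · obtain ⟨m, hm, hmax⟩ := ih hs'
        rcases O.total a m with hle | hle
        · refine ⟨m, Finset.mem_insert_of_mem hm, fun v hv => ?_⟩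
          rcases Finset.mem_insert.mp hv with rfl | hv
          · exact hle
          · exact hmax v hv
        · refine ⟨a, Finset.mem_insert_self a s, fun v hv => ?_⟩
          rcases Finset.mem_insert.mp hv with rfl | hv
          · exact O.refl v
          · exact O.trans (hmax v hv) hle

private lemma creduce (O : AdmOrder n) (hI : StrongDiv I)
    (hlm : ∀ p : NCPoly k n, p ≠ 0 → lm p ∈ p.coeff.support ∧ ∀ a ∈ p.coeff.support, O.le a (lm p))
    (hG0 : (0 : NCPoly k n) ∉ G) (hA : Autoreduced I lm G) :
    ∀ (N : ℕ) (d : NCWord n →₀ k), d.support.card ≤ N →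
      (∀ w ∈ d.support, Red I lm G w) →
      Relation.ReflTransGen (CStep lm G) (d.sum fun w a => a • bpoly I lm G w) 0 := by
  classical
  intro N
  induction N with
  | zero =>
      intro d hcard _
      have : d = 0 := Finsupp.support_eq_empty.mp
        (Finset.card_eq_zero.mp (Nat.le_zero.mp hcard))
      subst this
      simp only [Finsupp.sum_zero_index]
      exact Relation.ReflTransGen.refl
  | succ N ih =>
      intro d hcard hd
      rcases d.support.eq_empty_or_nonempty with he | hne
      · have : d = 0 := Finsupp.support_eq_empty.mp he
        subst this
        simp only [Finsupp.sum_zero_index]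
        exact Relation.ReflTransGen.refl
      · obtain ⟨w₀, hw₀, hmax⟩ := exists_max O d.support hne
        obtain ⟨p, hp, l, r, hwf, ok⟩ := hd w₀ hw₀
        have hb := bpoly_spec hI hlm hG0 hA hp hwf ok
        have hpne : p ≠ 0 := by rintro rfl; exact hG0 hp
        have hplm : p.coeff (lm p) ≠ 0 := Finsupp.mem_support_iff.mp (hlm p hpne).1
        set f := d.sum fun w a => a • bpoly I lm G w with hf
        have hzero : ∀ w ∈ d.support, w ≠ w₀ → (d w • bpoly I lm G w).coeff w₀ = 0 := by
          intro w hwmem hwne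
          obtain ⟨q, hq, l', r', h', ok'⟩ := hd w hwmem
          have hbq := bpoly_spec hI hlm hG0 hA hq h' ok'
          have hz : (bpoly I lm G w).coeff w₀ = 0 := by
            by_contra hcon
            have hmem' : w₀ ∈ (bpoly I lm G w).coeff.support := Finsupp.mem_support_iff.mpr hcon
            rw [hbq] at hmem'
            have hle : O.le w₀ w := h' ▸ bsupp O hlm hG0 hq hmem'
            exact hwne (O.antisymm (hmax w hwmem) hle)
          rw [MonoidAlgebra.coeff_smul_apply, hz, smul_zero]
        have hfw : f.coeff w₀ = d w₀ * p.coeff (lm p) := by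
          rw [hf, Finsupp.sum, MonoidAlgebra.coeff_sum, Finset.sum_apply',
            Finset.sum_eq_single_of_mem w₀ hw₀ (fun b hb hbne => hzero b hb hbne),
            MonoidAlgebra.coeff_smul_apply, hb, hwf, bapply, smul_eq_mul]
        have hfw0 : f.coeff w₀ ≠ 0 := by
          rw [hfw]
          exact mul_ne_zero (Finsupp.mem_support_iff.mp hw₀) hplm
        have hstep : CStep lm G f ((d.erase w₀).sum fun w a => a • bpoly I lm G w) := by
          refine ⟨p, hp, w₀, Finsupp.mem_support_iff.mpr hfw0, l, r, hwf, ?_⟩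
          rw [hfw, mul_div_cancel_right₀ _ hplm, ← hb, eq_sub_iff_add_eq, hf,
            Finsupp.sum, Finsupp.sum, Finsupp.support_erase]
          rw [Finset.sum_congr rfl
            (fun w hw => by rw [Finsupp.erase_ne (Finset.ne_of_mem_erase hw)] :
              ∀ w ∈ d.support.erase w₀,
                (d.erase w₀) w • bpoly I lm G w = d w • bpoly I lm G w)]
          exact Finset.sum_erase_add _ _ hw₀
        refine Relation.ReflTransGen.head hstep (ih (d.erase w₀) ?_ ?_)
        · rw [Finsupp.support_erase]
          have := Finset.card_erase_of_mem hw₀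
          omega
        · intro w hw
          rw [Finsupp.support_erase] at hw
          exact hd w (Finset.mem_of_mem_erase hw)

end AuxIBGB
/-- **Every involutive basis with respect to a strong involutive division is a
Gröbner basis.**  If `G` is an involutive basis for an ideal of
`k⟨x_1, …, x_n⟩` with respect to a strong involutive division `I` and an
admissible monomial ordering `O`, then every S-polynomial
`S-pol(ℓ₁, gᵢ, ℓ₂, gⱼ) = LC(gⱼ)·ℓ₁·gᵢ·r₁ − LC(gᵢ)·ℓ₂·gⱼ·r₂`
coming from an overlap `ℓ₁·LM(gᵢ)·r₁ = ℓ₂·LM(gⱼ)·r₂` of the leading monomials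
of elements of `G` (where at least one of `ℓ₁, ℓ₂` and at least one of
`r₁, r₂` equals `1`, and the two occurrences of `LM(gᵢ)` and `LM(gⱼ)` in the
overlap word genuinely overlap) reduces conventionally to zero using `G`. -/
theorem involutive_basis_is_groebner {k : Type} [Field k] {n : ℕ}
    (O : AdmOrder n) (I : InvDivision n) (hI : StrongDiv I)
    (lm : NCPoly k n → NCWord n)
    (hlm : ∀ p : NCPoly k n, p ≠ 0 →
      lm p ∈ p.coeff.support ∧ ∀ a ∈ p.coeff.support, O.le a (lm p))
    (G : Finset (NCPoly k n)) (hG0 : (0 : NCPoly k n) ∉ G)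
    (hGbasis : InvolutiveBasis I lm G)
    (gi gj : NCPoly k n) (hgi : gi ∈ G) (hgj : gj ∈ G)
    (l₁ r₁ l₂ r₂ : NCWord n)
    (hoverlapword : l₁ * lm gi * r₁ = l₂ * lm gj * r₂)
    (hl : l₁ = 1 ∨ l₂ = 1) (hr : r₁ = 1 ∨ r₂ = 1)
    (hoverlap :
      (FreeMonoid.toList l₂).length <
        (FreeMonoid.toList l₁).length + (FreeMonoid.toList (lm gi)).length ∧
      (FreeMonoid.toList l₁).length <
        (FreeMonoid.toList l₂).length + (FreeMonoid.toList (lm gj)).length) :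
    Relation.ReflTransGen (CStep lm G)
      ((gj.coeff (lm gj)) • (MonoidAlgebra.single l₁ (1 : k) * gi * MonoidAlgebra.single r₁ (1 : k))
        - (gi.coeff (lm gi)) • (MonoidAlgebra.single l₂ (1 : k) * gj * MonoidAlgebra.single r₂ (1 : k)))
      0 := by
  classical
  obtain ⟨hA, hred⟩ := hGbasis
  obtain ⟨d₁, hd₁, hrep₁⟩ := rep_of_isteps hI hlm hG0 hA (hred gi hgi l₁ r₁)
  obtain ⟨d₂, hd₂, hrep₂⟩ := rep_of_isteps hI hlm hG0 hA (hred gj hgj l₂ r₂)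
  have hT : ∀ e : NCWord n →₀ k,
      (e.sum fun w a => a • bpoly I lm G w) =
        Finsupp.linearCombination k (bpoly I lm G) e := fun e =>
    (Finsupp.linearCombination_apply k e).symm
  set d : NCWord n →₀ k := gj.coeff (lm gj) • d₁ - gi.coeff (lm gi) • d₂ with hd
  have hrepr :
      (gj.coeff (lm gj)) • (MonoidAlgebra.single l₁ (1 : k) * gi * MonoidAlgebra.single r₁ (1 : k))
        - (gi.coeff (lm gi)) • (MonoidAlgebra.single l₂ (1 : k) * gj * MonoidAlgebra.single r₂ (1 : k))
      = d.sum fun w a => a • bpoly I lm G w := by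
    rw [hT, hd, map_sub, map_smul, map_smul, ← hT, ← hT, ← hrep₁, ← hrep₂]
  rw [hrepr]
  refine creduce O hI hlm hG0 hA d.support.card d le_rfl (fun w hw => ?_)
  have hsub : d.support ⊆ d₁.support ∪ d₂.support := by
    intro v hv
    rcases Finset.mem_union.mp (Finsupp.support_sub hv) with h1 | h1
    · exact Finset.mem_union_left _ (Finsupp.support_smul h1)
    · exact Finset.mem_union_right _ (Finsupp.support_smul h1)
  rcases Finset.mem_union.mp (hsub hw) with h1 | h1
  · exact hd₁ w h1
  · exact hd₂ w h1
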